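/- arXiv:2008.02310 — 3 statements merged into one kernel-verified Lean document; each statement's English description precedes it below -/
import Mathlib

section
/- Let m ≥ 3 and ξ = exp(2πi/m). For k ∈ (ℤ/mℤ)*, define s_k = -(1-ξ^k)/2 + 1/(2(1-ξ^k)). Then for distinct k, k' ∈ (ℤ/mℤ)*, we have s_k ≠ s_{k'}. -/
/-!
Write `u = 1 - ξ^k`, `v = 1 - ξ^k'`. Since `s(u) - s(v) = (u - v)(uv + 1) / (2uv)`, equal values
force `uv = -1`, i.e. `1 / v = -u`. But for `|a| = 1`, `a ≠ 1`, the number `1 / (1 - a)` lies on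
the line `Re = 1/2`, whereas `Re(-u) = Re(ξ^k) - 1 ≤ 0`.
-/

theorem eq_or_mul_eq_neg_one_of_neg_half_add_inv_eq {K : Type*} [Field K] [NeZero (2 : K)]
    {u v : K} (hu : u ≠ 0) (hv : v ≠ 0) (h : -u / 2 + 1 / (2 * u) = -v / 2 + 1 / (2 * v)) :
    u = v ∨ u * v = -1 := by
  have h2 : (2 : K) ≠ 0 := two_ne_zero
  have hfactor : (u - v) * (u * v + 1) = 0 := by
    field_simp at h
    linear_combination -h
  rcases mul_eq_zero.mp hfactor with huv | huv
  · exact .inl (sub_eq_zero.mp huv)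
  · exact .inr (eq_neg_of_add_eq_zero_left huv)

namespace Complex

theorem re_inv_one_sub_of_norm_eq_one {a : ℂ} (ha : ‖a‖ = 1) (ha1 : a ≠ 1) :
    (1 - a)⁻¹.re = 1 / 2 := by
  have hsq : a.re ^ 2 + a.im ^ 2 = 1 := by
    have := sq_norm_sub_sq_re a
    rw [ha] at this
    linarith
  have hre : a.re ≠ 1 := by
    intro h
    have him : a.im = 0 := by nlinarith
    exact ha1 (Complex.ext (by simpa using h) (by simpa using him))
  have hre' : 1 - a.re ≠ 0 := sub_ne_zero.mpr (Ne.symm hre)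
  rw [inv_re, normSq_apply]
  simp only [sub_re, one_re, sub_im, one_im]
  field_simp
  nlinarith

theorem neg_half_add_inv_one_sub_ne {a b : ℂ} (ha : ‖a‖ = 1) (hb : ‖b‖ = 1) (ha1 : a ≠ 1)
    (hb1 : b ≠ 1) (hab : a ≠ b) :
    -(1 - a) / 2 + 1 / (2 * (1 - a)) ≠ -(1 - b) / 2 + 1 / (2 * (1 - b)) := by
  intro h
  rcases eq_or_mul_eq_neg_one_of_neg_half_add_inv_eq (sub_ne_zero.mpr ha1.symm)
    (sub_ne_zero.mpr hb1.symm) h with huv | huv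
  · exact hab (sub_right_injective huv)
  · have hinv : (1 - b)⁻¹ = -(1 - a) := inv_eq_of_mul_eq_one_right (by linear_combination -huv)
    have hre := congrArg re hinv
    rw [re_inv_one_sub_of_norm_eq_one hb hb1] at hre
    have := re_le_norm a
    simp only [neg_re, sub_re, one_re] at hre
    linarith

end Complex

/-- For `m ≥ 3`, `ξ = exp(2πi/m)` and distinct units `k, k'` of `ℤ/mℤ`,
the numbers `s_k = -(1-ξ^k)/2 + 1/(2(1-ξ^k))` are distinct. -/
theorem stmt_0 (m : ℕ) (hm : 3 ≤ m) (ξ : ℂ)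
    (hξ : ξ = Complex.exp (2 * Real.pi * Complex.I / m))
    (k k' : (ZMod m)ˣ) (hkk' : k ≠ k') :
    -(1 - ξ ^ ((k : ZMod m).val)) / 2 + 1 / (2 * (1 - ξ ^ ((k : ZMod m).val))) ≠
      -(1 - ξ ^ ((k' : ZMod m).val)) / 2 + 1 / (2 * (1 - ξ ^ ((k' : ZMod m).val))) := by
  have hm0 : m ≠ 0 := by omega
  have : NeZero m := ⟨hm0⟩
  have hξ' : IsPrimitiveRoot ξ m := hξ ▸ Complex.isPrimitiveRoot_exp m hm0
  have hprim (j : (ZMod m)ˣ) : IsPrimitiveRoot (ξ ^ (j : ZMod m).val) m :=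
    hξ'.pow_of_coprime _ (ZMod.val_coe_unit_coprime j)
  refine Complex.neg_half_add_inv_one_sub_ne ((hprim k).norm'_eq_one hm0)
    ((hprim k').norm'_eq_one hm0) ((hprim k).ne_one (by omega)) ((hprim k').ne_one (by omega))
    fun h => hkk' (Units.ext (ZMod.val_injective _ ?_))
  exact hξ'.pow_inj (ZMod.val_lt _) (ZMod.val_lt _) h
end

section
/- Let n ≥ 3, K a field, and M/K a Galois extension with Galois group D_{2^n} = ⟨r, s | r^{2^{n-1}} = s² = 1, srs^{-1} = r^{-1}⟩. Let L = M^{⟨r⟩} be the fixed field of r, and suppose L/K embeds into a cyclic extension H/K of degree 4 with Gal(H/K) = ⟨τ⟩. Then: (i) H/L and M/L are linearly disjoint; (ii) HM/K is Galois with group isomorphic to Δ_n = ℤ/2^{n-1}ℤ ⋊ ℤ/4ℤ (action by inversion); (iii) there is a unique lift ρ ∈ Gal(HM/H) of r, and for every lift σ ∈ Gal(HM/K) of τ, the elements ρ and σ satisfy ρ^{2^{n-1}} = σ⁴ = 1 and σρσ^{-1} = ρ^{-1}, and generate Gal(HM/K). -/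
/-- The homomorphism `ℤ/nℤ → G` (written multiplicatively) sending `1` to an element
`g` with `g ^ n = 1`. -/
def zmodHom (n : ℕ) {G : Type*} [Group G] (g : G) (hg : g ^ n = 1) :
    Multiplicative (ZMod n) →* G :=
  AddMonoidHom.toMultiplicativeLeft
    (ZMod.lift n ⟨zmultiplesHom (Additive G) (Additive.ofMul g), by
      rw [zmultiplesHom_apply, ← ofMul_zpow, zpow_natCast, hg]; rfl⟩)

/-- The action of `ℤ/4ℤ` on `ℤ/2^(n-1)ℤ` where `1` acts by inversion. -/
def invAction (n : ℕ) :
    Multiplicative (ZMod 4) →* MulAut (Multiplicative (ZMod (2 ^ (n - 1)))) :=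
  zmodHom 4 (MulEquiv.inv (Multiplicative (ZMod (2 ^ (n - 1))))) (by
    ext x
    simp [pow_succ, MulAut.mul_apply])

/-- `Δ_n = ℤ/2^(n-1)ℤ ⋊ ℤ/4ℤ`, the generator of `ℤ/4ℤ` acting by inversion. -/
def Delta (n : ℕ) : Type :=
  SemidirectProduct (Multiplicative (ZMod (2 ^ (n - 1)))) (Multiplicative (ZMod 4))
    (invAction n)

instance (n : ℕ) : Group (Delta n) :=
  inferInstanceAs (Group (SemidirectProduct _ _ _))

/-!
Restriction embeds `Gal(HM/K)` into `Gal(H/K) × Gal(M/K)`, and an automorphism of `HM` fixes `L`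
on the `H` side iff it does so on the `M` side, i.e. (as `L = M^⟨r⟩`) iff its restriction to `M`
lies in `⟨r⟩`. A lift `σ` of `τ` does not fix `L`, so it restricts to a reflection of `D_{2^n}`;
then `σ²` is a non-trivial element of `Gal(HM/M)`, which injects into `Gal(H/L)` of order `2`,
hence maps onto it. This gives `|Gal(HM/K)| = 2^(n+1)`, the lift `ρ` of `r`, and the relations between `ρ` and `σ`,
each of which is checked on both restrictions. Every element is `ρ^m σ^k`, since `Gal(HM/H)`
injects into `⟨r⟩`; so `Δ_n → Gal(HM/K)`, sending the generators to `ρ` and `σ`, is onto,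
hence bijective by counting.
-/

open Module Subgroup

section Dihedral

variable {G : Type*} [Group G] {r s : G}

theorem conj_zpow_eq_zpow_neg (hrs : s * r * s⁻¹ = r⁻¹) (k : ℤ) :
    MulAut.conj s (r ^ k) = r ^ (-k) := by
  rw [zpow_neg, ← inv_zpow, ← hrs, map_zpow, MulAut.conj_apply]

theorem mul_zpow_eq_zpow_neg_mul (hrs : s * r * s⁻¹ = r⁻¹) (k : ℤ) :
    s * r ^ k = r ^ (-k) * s := by
  rw [← conj_zpow_eq_zpow_neg hrs, MulAut.conj_apply, inv_mul_cancel_right]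

theorem exists_eq_zpow_or_eq_zpow_mul (hs : s ^ 2 = 1) (hrs : s * r * s⁻¹ = r⁻¹)
    (hgen : closure {r, s} = ⊤) (g : G) : ∃ k : ℤ, g = r ^ k ∨ g = r ^ k * s := by
  have hsr := mul_zpow_eq_zpow_neg_mul hrs
  have hs_inv : s⁻¹ = s := inv_eq_of_mul_eq_one_left (by rw [← sq, hs])
  induction hgen ▸ mem_top g using closure_induction with
  | mem x hx =>
    rcases hx with rfl | rfl
    · exact ⟨1, .inl (zpow_one x).symm⟩
    · exact ⟨0, .inr (by rw [zpow_zero, one_mul])⟩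
  | one => exact ⟨0, .inl (zpow_zero r).symm⟩
  | mul x y _ _ hx hy =>
    obtain ⟨a, rfl | rfl⟩ := hx <;> obtain ⟨b, rfl | rfl⟩ := hy
    · exact ⟨a + b, .inl (zpow_add r a b).symm⟩
    · exact ⟨a + b, .inr (by rw [zpow_add, mul_assoc])⟩
    · exact ⟨a - b, .inr (by rw [mul_assoc, hsr, ← mul_assoc, ← zpow_add, sub_eq_add_neg])⟩
    · refine ⟨a - b, .inl ?_⟩
      rw [mul_assoc, ← mul_assoc s, hsr, mul_assoc, ← sq, hs, mul_one, ← zpow_add,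
        sub_eq_add_neg]
  | inv x _ hx =>
    obtain ⟨a, rfl | rfl⟩ := hx
    · exact ⟨-a, .inl (zpow_neg r a).symm⟩
    · exact ⟨a, .inr (by rw [mul_inv_rev, hs_inv, ← zpow_neg, hsr, neg_neg])⟩

theorem sq_eq_one_and_conj_eq_inv_of_notMem_zpowers (hs : s ^ 2 = 1) (hrs : s * r * s⁻¹ = r⁻¹)
    (hgen : closure {r, s} = ⊤) {g : G} (hg : g ∉ zpowers r) :
    g ^ 2 = 1 ∧ g * r * g⁻¹ = r⁻¹ := by
  obtain ⟨k, rfl | rfl⟩ := exists_eq_zpow_or_eq_zpow_mul hs hrs hgen g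
  · exact absurd (zpow_mem_zpowers r k) hg
  constructor
  · rw [sq, mul_assoc, ← mul_assoc s, mul_zpow_eq_zpow_neg_mul hrs, mul_assoc, ← sq, hs, mul_one,
      ← zpow_add, add_neg_cancel, zpow_zero]
  · calc r ^ k * s * r * (r ^ k * s)⁻¹ = r ^ k * (s * r * s⁻¹) * r ^ (-k) := by group
      _ = r⁻¹ := by rw [hrs]; group

end Dihedral

section Delta

open Multiplicative

theorem zmodHom_ofAdd_natCast {G : Type*} [Group G] (k : ℕ) (g : G) (hg : g ^ k = 1) (m : ℕ) :
    zmodHom k g hg (ofAdd (m : ZMod k)) = g ^ m := by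
  rw [← Int.cast_natCast]
  change Additive.toMul (ZMod.lift k _ ((m : ℤ) : ZMod k)) = g ^ m
  rw [ZMod.lift_coe]
  simp

theorem MulAut.pow_apply_eq_zpow_neg_one_pow {X : Type*} [Group X] {φ : MulAut X} {x : X}
    (h : ∀ k : ℤ, φ (x ^ k) = x ^ (-k)) (a : ℕ) : (φ ^ a) x = x ^ ((-1 : ℤ) ^ a) := by
  induction a with
  | zero => simp
  | succ a ih => rw [pow_succ', MulAut.mul_apply, ih, h, pow_succ', neg_one_mul]

theorem invAction_ofAdd_natCast_apply (n a : ℕ) (x : Multiplicative (ZMod (2 ^ (n - 1)))) :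
    invAction n (ofAdd (a : ZMod 4)) x = x ^ ((-1 : ℤ) ^ a) := by
  rw [invAction, zmodHom_ofAdd_natCast]
  exact MulAut.pow_apply_eq_zpow_neg_one_pow (fun k => (zpow_neg x k).symm) a

variable {G : Type*} [Group G] {n : ℕ} {ρ σ : G}

theorem zmodHom_comp_invAction (hρ : ρ ^ 2 ^ (n - 1) = 1) (hσ : σ ^ 4 = 1)
    (hσρ : σ * ρ * σ⁻¹ = ρ⁻¹) (q : Multiplicative (ZMod 4)) :
    (zmodHom _ ρ hρ).comp (invAction n q).toMonoidHom =
      (MulAut.conj (zmodHom 4 σ hσ q)).toMonoidHom.comp (zmodHom _ ρ hρ) := by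
  obtain ⟨a, rfl⟩ : ∃ a : ℕ, ofAdd (a : ZMod 4) = q :=
    (ZMod.natCast_zmod_surjective q.toAdd).imp fun _ h => by rw [h, ofAdd_toAdd]
  refine MonoidHom.ext fun m => ?_
  obtain ⟨b, rfl⟩ : ∃ b : ℕ, ofAdd (b : ZMod (2 ^ (n - 1))) = m :=
    (ZMod.natCast_zmod_surjective m.toAdd).imp fun _ h => by rw [h, ofAdd_toAdd]
  simp only [MonoidHom.comp_apply, MulEquiv.coe_toMonoidHom, invAction_ofAdd_natCast_apply,
    map_zpow, zmodHom_ofAdd_natCast, map_pow]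
  rw [MulAut.pow_apply_eq_zpow_neg_one_pow (conj_zpow_eq_zpow_neg hσρ) a, ← zpow_natCast,
    ← zpow_natCast, ← zpow_mul, ← zpow_mul, mul_comm]

def Delta.lift (hρ : ρ ^ 2 ^ (n - 1) = 1) (hσ : σ ^ 4 = 1) (hσρ : σ * ρ * σ⁻¹ = ρ⁻¹) :
    Delta n →* G :=
  SemidirectProduct.lift _ _ (zmodHom_comp_invAction hρ hσ hσρ)

theorem Delta.card (hn : 1 ≤ n) : Nat.card (Delta n) = 2 ^ (n + 1) := by
  rw [Delta, SemidirectProduct.card, Nat.card_congr toAdd, Nat.card_congr toAdd, Nat.card_zmod,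
    Nat.card_zmod, show n + 1 = n - 1 + 2 by omega, pow_add]
  rfl

theorem Delta.lift_surjective (hρ : ρ ^ 2 ^ (n - 1) = 1) (hσ : σ ^ 4 = 1)
    (hσρ : σ * ρ * σ⁻¹ = ρ⁻¹) (hgen : closure {ρ, σ} = ⊤) :
    Function.Surjective (Delta.lift hρ hσ hσρ) := by
  rw [← MonoidHom.range_eq_top, eq_top_iff, ← hgen, closure_le]
  rintro _ (rfl | rfl)
  · refine ⟨SemidirectProduct.inl (ofAdd ((1 : ℕ) : ZMod _)), ?_⟩
    exact (SemidirectProduct.lift_inl _ _ _ _).trans (by rw [zmodHom_ofAdd_natCast, pow_one])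
  · refine ⟨SemidirectProduct.inr (ofAdd ((1 : ℕ) : ZMod 4)), ?_⟩
    exact (SemidirectProduct.lift_inr _ _ _ _).trans (by rw [zmodHom_ofAdd_natCast, pow_one])

theorem nonempty_mulEquiv_delta [Finite G] (hn : 1 ≤ n) (hcard : Nat.card G = 2 ^ (n + 1))
    (hρ : ρ ^ 2 ^ (n - 1) = 1) (hσ : σ ^ 4 = 1) (hσρ : σ * ρ * σ⁻¹ = ρ⁻¹)
    (hgen : closure {ρ, σ} = ⊤) : Nonempty (G ≃* Delta n) :=
  have : Finite (Delta n) := Nat.finite_of_card_ne_zero (by rw [Delta.card hn]; positivity)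
  ⟨(MulEquiv.ofBijective _ ((Delta.lift_surjective hρ hσ hσρ hgen).bijective_of_nat_card_le
    (by rw [hcard, Delta.card hn]))).symm⟩

end Delta

namespace IntermediateField

variable {K : Type*} [Field K]

theorem finrank_fixedField_zpowers_mul_orderOf {E : Type*} [Field E] [Algebra K E]
    [FiniteDimensional K E] (r : Gal(E/K)) :
    finrank K (fixedField (zpowers r)) * orderOf r = finrank K E := by
  rw [← Nat.card_zpowers, ← finrank_fixedField_eq_card, finrank_mul_finrank]

variable {Ω : Type*} [Field Ω] [Algebra K Ω]

theorem restrict_eq_fixedField_zpowers {L M : IntermediateField K Ω} (hLM : L ≤ M)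
    (r : Gal(M/K)) (hL : ∀ x : Ω, x ∈ L ↔ ∃ hx : x ∈ M, r ⟨x, hx⟩ = ⟨x, hx⟩) :
    restrict hLM = fixedField (zpowers r) := by
  ext y
  rw [mem_restrict, hL, mem_fixedField_iff]
  refine ⟨fun ⟨_, hy⟩ f hf => ?_, fun hy => ⟨y.2, hy r (mem_zpowers r)⟩⟩
  exact (zpowers_le (H := MulAction.stabilizer Gal(M/K) y)).2 hy hf

theorem finrank_mul_orderOf_eq {L M : IntermediateField K Ω} [FiniteDimensional K M]
    (hLM : L ≤ M) (r : Gal(M/K)) (hL : ∀ x : Ω, x ∈ L ↔ ∃ hx : x ∈ M, r ⟨x, hx⟩ = ⟨x, hx⟩) :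
    finrank K L * orderOf r = finrank K M := by
  rw [(restrictAlgEquiv hLM).toLinearEquiv.finrank_eq, restrict_eq_fixedField_zpowers hLM r hL,
    finrank_fixedField_zpowers_mul_orderOf]

theorem fixingSubgroup_restrict_eq_zpowers {L M : IntermediateField K Ω} [FiniteDimensional K M]
    (hLM : L ≤ M) (r : Gal(M/K)) (hL : ∀ x : Ω, x ∈ L ↔ ∃ hx : x ∈ M, r ⟨x, hx⟩ = ⟨x, hx⟩) :
    (restrict hLM).fixingSubgroup = zpowers r := by
  rw [restrict_eq_fixedField_zpowers hLM r hL, fixingSubgroup_fixedField]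

theorem card_fixingSubgroup_restrict_mul_finrank {L E : IntermediateField K Ω} (hLE : L ≤ E)
    [FiniteDimensional K E] [IsGalois K E] :
    Nat.card (restrict hLE).fixingSubgroup * finrank K L = finrank K E := by
  rw [IsGalois.card_fixingSubgroup_eq_finrank, (restrictAlgEquiv hLE).toLinearEquiv.finrank_eq,
    mul_comm, finrank_mul_finrank]

variable {E F : IntermediateField K Ω}

noncomputable def autRestrict (h : E ≤ F) [Normal K E] : Gal(F/K) →* Gal(E/K) :=
  letI := (inclusion h).toAlgebra
  haveI : IsScalarTower K E F := IsScalarTower.of_algebraMap_eq fun _ => rfl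
  AlgEquiv.restrictNormalHom E

theorem coe_autRestrict_apply (h : E ≤ F) [Normal K E] (g : Gal(F/K)) (x : Ω) (hx : x ∈ E) :
    (autRestrict h g ⟨x, hx⟩ : Ω) = g ⟨x, h hx⟩ :=
  letI := (inclusion h).toAlgebra
  haveI : IsScalarTower K E F := IsScalarTower.of_algebraMap_eq fun _ => rfl
  congrArg Subtype.val (AlgEquiv.restrictNormal_commutes g E ⟨x, hx⟩)

theorem autRestrict_surjective (h : E ≤ F) [Normal K E] [Normal K F] :
    Function.Surjective (autRestrict h) :=
  letI := (inclusion h).toAlgebra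
  haveI : IsScalarTower K E F := IsScalarTower.of_algebraMap_eq fun _ => rfl
  AlgEquiv.restrictNormalHom_surjective F

theorem autRestrict_eq_iff (h : E ≤ F) [Normal K E] (g : Gal(F/K)) (t : Gal(E/K)) :
    autRestrict h g = t ↔ ∀ (x : Ω) (hx : x ∈ E), (g ⟨x, h hx⟩ : Ω) = t ⟨x, hx⟩ := by
  refine ⟨fun hg x hx => ?_, fun hg => AlgEquiv.ext fun y => Subtype.ext ?_⟩
  · rw [← coe_autRestrict_apply, hg]
  · exact (coe_autRestrict_apply h g y.1 y.2).trans (hg y.1 y.2)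

theorem autRestrict_eq_one_iff (h : E ≤ F) [Normal K E] (g : Gal(F/K)) :
    autRestrict h g = 1 ↔ ∀ (x : Ω) (hx : x ∈ E), g ⟨x, h hx⟩ = ⟨x, h hx⟩ :=
  (autRestrict_eq_iff h g 1).trans <| forall₂_congr fun _ _ => by
    rw [AlgEquiv.one_apply, Subtype.ext_iff]

theorem autRestrict_mem_fixingSubgroup_restrict_iff (h : E ≤ F) [Normal K E]
    {L : IntermediateField K Ω} (hLE : L ≤ E) (g : Gal(F/K)) :
    autRestrict h g ∈ (restrict hLE).fixingSubgroup ↔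
      ∀ (x : Ω) (hx : x ∈ L), (g ⟨x, h (hLE hx)⟩ : Ω) = x := by
  rw [mem_fixingSubgroup_iff]
  refine ⟨fun hg x hx => ?_, fun hg y hy => Subtype.ext ?_⟩
  · rw [← coe_autRestrict_apply]
    exact congrArg Subtype.val (hg ⟨x, hLE hx⟩ ((mem_restrict hLE _).2 hx))
  · exact (coe_autRestrict_apply h g y.1 y.2).trans (hg y.1 ((mem_restrict hLE y).1 hy))

theorem autRestrict_sup_left_mem_fixingSubgroup_iff {E₁ E₂ L : IntermediateField K Ω}
    [Normal K E₁] [Normal K E₂] (h₁ : L ≤ E₁) (h₂ : L ≤ E₂) (g : Gal(↥(E₁ ⊔ E₂)/K)) :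
    autRestrict le_sup_left g ∈ (restrict h₁).fixingSubgroup ↔
      autRestrict le_sup_right g ∈ (restrict h₂).fixingSubgroup :=
  (autRestrict_mem_fixingSubgroup_restrict_iff le_sup_left h₁ g).trans
    (autRestrict_mem_fixingSubgroup_restrict_iff le_sup_right h₂ g).symm

theorem autRestrict_prod_autRestrict_injective (E₁ E₂ : IntermediateField K Ω) [Normal K E₁]
    [Normal K E₂] :
    Function.Injective ((autRestrict (le_sup_left : E₁ ≤ E₁ ⊔ E₂)).prod
      (autRestrict (le_sup_right : E₂ ≤ E₁ ⊔ E₂))) := by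
  intro g g' hgg'
  refine AlgEquiv.coe_toAlgHom_injective (algHom_ext_of_eq_adjoin _ (sup_def E₁ E₂) ?_)
  rintro x (hx | hx)
  · exact Subtype.ext <| (coe_autRestrict_apply le_sup_left g x hx).symm.trans <|
      (congrArg (fun t => (t.1 ⟨x, hx⟩ : Ω)) hgg').trans (coe_autRestrict_apply _ g' x hx)
  · exact Subtype.ext <| (coe_autRestrict_apply le_sup_right g x hx).symm.trans <|
      (congrArg (fun t => (t.2 ⟨x, hx⟩ : Ω)) hgg').trans (coe_autRestrict_apply _ g' x hx)

end IntermediateField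

section FiberProduct

variable {G C D : Type*} [Group G] [Group C] [Group D] {πC : G →* C} {πD : G →* D}

theorem card_map_ker_eq_of_injective_prod (hinj : Function.Injective (πC.prod πD)) :
    Nat.card (πD.ker.map πC) = Nat.card πD.ker :=
  Nat.card_image_of_injOn fun _ ha _ hb hab => hinj (Prod.ext hab (ha.trans hb.symm))

theorem card_eq_card_mul_card_of_map_ker_eq (hD : Function.Surjective πD)
    (hinj : Function.Injective (πC.prod πD)) {A : Subgroup C} (hmap : πD.ker.map πC = A) :
    Nat.card G = Nat.card D * Nat.card A := by
  rw [← πD.ker.card_mul_index, index_ker, MonoidHom.range_eq_top.2 hD, card_top,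
    ← hmap, card_map_ker_eq_of_injective_prod hinj, mul_comm]

theorem exists_map_eq_one_and_map_eq (hD : Function.Surjective πD) {A : Subgroup C}
    {B : Subgroup D} (hAB : ∀ g, πC g ∈ A ↔ πD g ∈ B) (hmap : πD.ker.map πC = A) {b : D}
    (hb : b ∈ B) : ∃ g, πC g = 1 ∧ πD g = b := by
  obtain ⟨g, rfl⟩ := hD b
  obtain ⟨k, hk, hkg⟩ := hmap ▸ (hAB g).2 hb
  refine ⟨k⁻¹ * g, ?_, ?_⟩
  · rw [map_mul, map_inv, hkg, inv_mul_cancel]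
  · rw [map_mul, map_inv, MonoidHom.mem_ker.1 hk, inv_one, one_mul]

theorem closure_pair_eq_top_of_injective_prod (hinj : Function.Injective (πC.prod πD))
    {r : D} {τ : C} (hτ : ∀ c, c ∈ zpowers τ) (hker : ∀ g, πC g = 1 → πD g ∈ zpowers r)
    {ρ σ : G} (hρC : πC ρ = 1) (hρD : πD ρ = r) (hσ : πC σ = τ) :
    closure {ρ, σ} = ⊤ := by
  refine eq_top_iff.2 fun g _ => ?_
  obtain ⟨k, hk⟩ := mem_zpowers_iff.1 (hτ (πC g))
  have hC : πC (g * σ ^ (-k)) = 1 := by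
    rw [map_mul, map_zpow, hσ, ← hk, zpow_neg, mul_inv_cancel]
  obtain ⟨m, hm⟩ := mem_zpowers_iff.1 (hker _ hC)
  have hgσ : g * σ ^ (-k) = ρ ^ m :=
    hinj (Prod.ext (show πC _ = πC _ by rw [hC, map_zpow, hρC, one_zpow])
      (show πD _ = πD _ by rw [← hm, map_zpow, hρD]))
  rw [← mul_inv_cancel_right g (σ ^ (-k)), hgσ, ← zpow_neg, neg_neg]
  exact mul_mem (zpow_mem (subset_closure (.inl rfl)) m) (zpow_mem (subset_closure (.inr rfl)) k)

variable {τ : C} {r s : D} {A : Subgroup C}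

theorem sq_eq_one_and_conj_eq_inv_of_map_eq (hs : s ^ 2 = 1) (hrs : s * r * s⁻¹ = r⁻¹)
    (hgen : closure {r, s} = ⊤) (hτA : τ ∉ A) (hAB : ∀ g, πC g ∈ A ↔ πD g ∈ zpowers r)
    {σ : G} (hσ : πC σ = τ) : πD σ ^ 2 = 1 ∧ πD σ * r * (πD σ)⁻¹ = r⁻¹ :=
  sq_eq_one_and_conj_eq_inv_of_notMem_zpowers hs hrs hgen (by rw [← hAB, hσ]; exact hτA)

theorem map_ker_eq_of_dihedral [Finite G] (hinj : Function.Injective (πC.prod πD))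
    (hC : Function.Surjective πC) (hτord : orderOf τ = 4) (hs : s ^ 2 = 1)
    (hrs : s * r * s⁻¹ = r⁻¹) (hgen : closure {r, s} = ⊤) (hA : Nat.card A = 2)
    (hAB : ∀ g, πC g ∈ A ↔ πD g ∈ zpowers r) :
    πD.ker.map πC = A := by
  have : Finite A := Nat.finite_of_card_ne_zero (by omega)
  have hτA : τ ∉ A := fun hτ => by simpa [hτord, hA] using A.orderOf_dvd_natCard hτ
  obtain ⟨σ, hσ⟩ := hC τ
  have hσ2 : σ ^ 2 ∈ πD.ker := by
    rw [MonoidHom.mem_ker, map_pow, (sq_eq_one_and_conj_eq_inv_of_map_eq hs hrs hgen hτA hAB hσ).1]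
  have hσ2_ne : σ ^ 2 ≠ 1 := fun h => by
    simpa [hτord] using
      orderOf_le_of_pow_eq_one (x := τ) two_pos (by rw [← hσ, ← map_pow, h, map_one])
  refine eq_of_le_of_card_ge ?_ ?_
  · rintro _ ⟨k, hk, rfl⟩
    exact (hAB k).2 (by rw [MonoidHom.mem_ker.1 hk]; exact one_mem _)
  · rw [hA, card_map_ker_eq_of_injective_prod hinj]
    exact (one_lt_card_iff_ne_bot _).2 fun h => hσ2_ne ((mem_bot).1 (h ▸ hσ2))

theorem card_eq_and_existsUnique_and_presentation [Finite G]
    (hinj : Function.Injective (πC.prod πD)) (hC : Function.Surjective πC)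
    (hD : Function.Surjective πD) (hτ : ∀ c, c ∈ zpowers τ) (hτord : orderOf τ = 4)
    (hs : s ^ 2 = 1) (hrs : s * r * s⁻¹ = r⁻¹) (hgen : closure {r, s} = ⊤) (hA : Nat.card A = 2)
    (hAB : ∀ g, πC g ∈ A ↔ πD g ∈ zpowers r) :
    Nat.card G = Nat.card D * 2 ∧ (∃! ρ, πC ρ = 1 ∧ πD ρ = r) ∧
      ∀ ρ σ, πC ρ = 1 ∧ πD ρ = r → πC σ = τ →
        ρ ^ orderOf r = 1 ∧ σ ^ 4 = 1 ∧ σ * ρ * σ⁻¹ = ρ⁻¹ ∧ closure {ρ, σ} = ⊤ := by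
  have hmap := map_ker_eq_of_dihedral hinj hC hτord hs hrs hgen hA hAB
  have hτA : τ ∉ A := fun hτ => by simpa [hτord, hA] using A.orderOf_dvd_natCard hτ
  refine ⟨hA ▸ card_eq_card_mul_card_of_map_ker_eq hD hinj hmap, ?_, ?_⟩
  · obtain ⟨ρ, hρ⟩ := exists_map_eq_one_and_map_eq hD hAB hmap (mem_zpowers r)
    exact ⟨ρ, hρ, fun ρ' hρ' => hinj (Prod.ext (hρ'.1.trans hρ.1.symm) (hρ'.2.trans hρ.2.symm))⟩
  rintro ρ σ ⟨hρC, hρD⟩ hσ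
  obtain ⟨hσ2, hσr⟩ := sq_eq_one_and_conj_eq_inv_of_map_eq hs hrs hgen hτA hAB hσ
  have hσ4 : πD σ ^ 4 = 1 := by rw [show 4 = 2 * 2 from rfl, pow_mul, hσ2, one_pow]
  have hτ4 : τ ^ 4 = 1 := hτord ▸ pow_orderOf_eq_one τ
  refine ⟨hinj (Prod.ext ?_ ?_), hinj (Prod.ext ?_ ?_), hinj (Prod.ext ?_ ?_),
    closure_pair_eq_top_of_injective_prod hinj hτ
      (fun g hg => (hAB g).1 (hg ▸ one_mem A)) hρC hρD hσ⟩
  all_goals simp [hρC, hρD, hσ, hσr, hσ4, hτ4, pow_orderOf_eq_one]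

end FiberProduct

open IntermediateField

/-- let `n ≥ 3`, `K` a field, and `M/K` a Galois extension (realized as an
intermediate field of an ambient extension `Ω/K`) with Galois group the dihedral group
`D_{2^n}`, generated by `r` of order `2^(n-1)` and `s` of order dividing `2` with
`srs⁻¹ = r⁻¹`. Let `L = M^⟨r⟩` and suppose `L ⊆ H` where `H/K` is cyclic of degree `4`
with Galois group generated by `τ`. Then: (i) `H/L` and `M/L` are linearly disjoint
(expressed by the degree identity `[HM:K]·[L:K] = [H:K]·[M:K]`); (ii) `HM/K` is Galois
of degree `2^(n+1)` with group isomorphic to `Δ_n`; (iii) there is a unique element `ρ`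
of `Gal(HM/H)` lifting `r`, and together with any lift `σ` of `τ`, the elements `ρ, σ`
satisfy `ρ^(2^(n-1)) = σ⁴ = 1`, `σρσ⁻¹ = ρ⁻¹` and generate `Gal(HM/K)`. -/
theorem stmt_10 (n : ℕ) (hn : 3 ≤ n) (K Ω : Type*) [Field K] [Field Ω] [Algebra K Ω]
    (M H L : IntermediateField K Ω)
    [IsGalois K ↥M] [FiniteDimensional K ↥M]
    (r s : ↥M ≃ₐ[K] ↥M)
    (hcardM : Nat.card (↥M ≃ₐ[K] ↥M) = 2 ^ n)
    (hr : orderOf r = 2 ^ (n - 1)) (hs : s ^ 2 = 1)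
    (hrs : s * r * s⁻¹ = r⁻¹)
    (hgenM : Subgroup.closure {r, s} = ⊤)
    (hLM : L ≤ M)
    (hLfix : ∀ x : Ω, x ∈ L ↔ ∃ hx : x ∈ M, r ⟨x, hx⟩ = ⟨x, hx⟩)
    [IsGalois K ↥H] [FiniteDimensional K ↥H]
    (hHdeg : Module.finrank K ↥H = 4)
    (hLH : L ≤ H)
    (τ : ↥H ≃ₐ[K] ↥H) (hτ : ∀ g : ↥H ≃ₐ[K] ↥H, g ∈ Subgroup.zpowers τ)
    (hτord : orderOf τ = 4) :
    -- (i) linear disjointness of H/L and M/L, as a degree identity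
    (Module.finrank K ↥(H ⊔ M) * Module.finrank K ↥L =
      Module.finrank K ↥H * Module.finrank K ↥M) ∧
    -- (ii) HM/K is Galois with group Δ_n
    IsGalois K ↥(H ⊔ M) ∧
    Nat.card (↥(H ⊔ M) ≃ₐ[K] ↥(H ⊔ M)) = 2 ^ (n + 1) ∧
    Nonempty ((↥(H ⊔ M) ≃ₐ[K] ↥(H ⊔ M)) ≃* Delta n) ∧
    -- (iii) unique lift ρ of r fixing H, and the presentation for ρ and any lift σ of τ
    (∃! ρ : ↥(H ⊔ M) ≃ₐ[K] ↥(H ⊔ M),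
      (∀ (x : Ω) (hx : x ∈ H),
        ρ ⟨x, (le_sup_left : H ≤ H ⊔ M) hx⟩ = ⟨x, (le_sup_left : H ≤ H ⊔ M) hx⟩) ∧
      (∀ (x : Ω) (hx : x ∈ M),
        (ρ ⟨x, (le_sup_right : M ≤ H ⊔ M) hx⟩ : Ω) = (r ⟨x, hx⟩ : Ω))) ∧
    (∀ ρ σ : ↥(H ⊔ M) ≃ₐ[K] ↥(H ⊔ M),
      ((∀ (x : Ω) (hx : x ∈ H),
          ρ ⟨x, (le_sup_left : H ≤ H ⊔ M) hx⟩ = ⟨x, (le_sup_left : H ≤ H ⊔ M) hx⟩) ∧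
        (∀ (x : Ω) (hx : x ∈ M),
          (ρ ⟨x, (le_sup_right : M ≤ H ⊔ M) hx⟩ : Ω) = (r ⟨x, hx⟩ : Ω))) →
      (∀ (x : Ω) (hx : x ∈ H),
        (σ ⟨x, (le_sup_left : H ≤ H ⊔ M) hx⟩ : Ω) = (τ ⟨x, hx⟩ : Ω)) →
      ρ ^ (2 ^ (n - 1)) = 1 ∧ σ ^ 4 = 1 ∧ σ * ρ * σ⁻¹ = ρ⁻¹ ∧
        Subgroup.closure {ρ, σ} = ⊤) := by
  have hn1 : 1 ≤ n := by omega
  have hdegM : finrank K M = 2 ^ n := by rw [← IsGalois.card_aut_eq_finrank, hcardM]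
  have hdegL : finrank K L = 2 := by
    have h := finrank_mul_orderOf_eq hLM r hLfix
    rw [hr, hdegM, ← Nat.sub_add_cancel hn1, pow_succ, Nat.add_sub_cancel] at h
    exact Nat.eq_of_mul_eq_mul_right (by positivity) (h.trans (mul_comm _ _))
  have hA : Nat.card (restrict hLH).fixingSubgroup = 2 := by
    have h := card_fixingSubgroup_restrict_mul_finrank hLH
    rw [hdegL, hHdeg] at h
    omega
  have : FiniteDimensional K ↥(H ⊔ M) := finiteDimensional_sup H M
  obtain ⟨hcard, hρ, hpres⟩ := card_eq_and_existsUnique_and_presentation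
    (autRestrict_prod_autRestrict_injective H M) (autRestrict_surjective _)
    (autRestrict_surjective _) hτ hτord hs hrs hgenM hA
    (fixingSubgroup_restrict_eq_zpowers hLM r hLfix ▸
      autRestrict_sup_left_mem_fixingSubgroup_iff hLH hLM)
  rw [hcardM, ← pow_succ] at hcard
  simp only [← autRestrict_eq_one_iff, ← autRestrict_eq_iff, ← hr]
  obtain ⟨ρ₀, hρ₀⟩ := hρ.exists
  obtain ⟨σ₀, hσ₀⟩ := autRestrict_surjective (le_sup_left : H ≤ H ⊔ M) τ
  obtain ⟨hρ₀r, hσ₀4, hσ₀ρ₀, hgen₀⟩ := hpres ρ₀ σ₀ hρ₀ hσ₀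
  refine ⟨?_, inferInstance, hcard,
    nonempty_mulEquiv_delta hn1 hcard (hr ▸ hρ₀r) hσ₀4 hσ₀ρ₀ hgen₀, hρ, hpres⟩
  rw [← IsGalois.card_aut_eq_finrank, hcard, hdegL, hHdeg, hdegM, pow_succ]
  ring
end

section
/- Let p be an odd prime with p ≡ 1 (mod 2^{n-1}), where n ≥ 3, and let m(X) = ∏_{k ∈ (ℤ/2^{n-1}ℤ)*} (X - s_k) ∈ ℚ[X], where s_k = -(1-ζ^k)/2 + 1/(2(1-ζ^k)) and ζ = exp(2πi/2^{n-1}). Then there exists an integer t with v_p(m(t)) > 0, i.e., p divides the numerator of m(t). -/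
/-!
For odd `k`, `w = ζ ^ k` runs over the roots of `X ^ M + 1`, `M = 2 ^ (n - 2)`, and
`t - s_k = (a - w) (b - w) / (2 (1 - w))` where `a, b` are the roots of `X² - (2 + 2t) X + 2t`.
Hence `2 ^ (M + 1) m(t) = (a ^ M + 1) (b ^ M + 1)`, which is an integer polynomial in `t`
(through a Dickson polynomial), positive for `t ≥ 0` since then `a, b ≥ 0`. As `2M ∣ p - 1`,
`ZMod p` contains a primitive `2M`-th root of unity `u`, and `t` can be chosen so that `u` is a
root of `X² - (2 + 2t) X + 2t` modulo `p`; then `u ^ M + 1 = 0` puts `p` into the numerator.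
-/

open Polynomial Finset

theorem Finset.filter_odd_range_two_mul (M : ℕ) :
    (range (2 * M)).filter Odd = (range M).image (fun j => 2 * j + 1) := by
  ext k
  simp only [mem_filter, mem_range, mem_image, Nat.odd_iff]
  constructor
  · rintro ⟨hk, hodd⟩
    exact ⟨k / 2, by omega, by omega⟩
  · rintro ⟨j, hj, rfl⟩
    omega

theorem Finset.card_filter_odd_range_two_mul (M : ℕ) :
    #((range (2 * M)).filter Odd) = M := by
  rw [filter_odd_range_two_mul, card_image_of_injective _ (fun i j h => by simpa using h),
    card_range]

theorem IsPrimitiveRoot.prod_filter_odd_sub_pow {R : Type*} [CommRing R] [IsDomain R]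
    {M : ℕ} (hM : 0 < M) {μ : R} (hμ : IsPrimitiveRoot μ (2 * M)) (z : R) :
    ∏ k ∈ (range (2 * M)).filter Odd, (z - μ ^ k) = z ^ M + 1 := by
  have hμM : μ ^ M = -1 := (hμ.pow (by omega) (mul_comm 2 M)).eq_neg_one_of_two_right
  have := congrArg (eval z) (X_pow_sub_C_eq_prod (hμ.pow (by omega) rfl) hM hμM)
  simp only [eval_sub, eval_pow, eval_X, eval_C, eval_prod, sub_neg_eq_add] at this
  rw [this, filter_odd_range_two_mul, prod_image (fun i _ j _ h => by simpa using h)]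
  simp [pow_succ, pow_mul]

theorem IsPrimitiveRoot.pow_ne_one_of_odd {R : Type*} [CommMonoid R] {M : ℕ} {μ : R}
    (hμ : IsPrimitiveRoot μ (2 * M)) {k : ℕ} (hk : Odd k) : μ ^ k ≠ 1 := by
  rw [Ne, hμ.pow_eq_one_iff_dvd]
  rintro ⟨e, rfl⟩
  exact Nat.not_even_iff_odd.mpr hk ⟨M * e, by ring⟩

theorem sub_s_eq_mul_div {K : Type*} [Field K] (h2 : (2 : K) ≠ 0) {t a b w : K}
    (hsum : a + b = 2 + 2 * t) (hprod : a * b = 2 * t) (hw : w ≠ 1) :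
    t - (-(1 - w) / 2 + 1 / (2 * (1 - w))) = (a - w) * (b - w) / (2 * (1 - w)) := by
  have hw' : 1 - w ≠ 0 := sub_ne_zero.mpr hw.symm
  rw [eq_div_iff (mul_ne_zero h2 hw')]
  field_simp
  linear_combination w * hsum - hprod

theorem IsPrimitiveRoot.prod_filter_odd_sub_s {K : Type*} [Field K] (h2 : (2 : K) ≠ 0)
    {M : ℕ} (hM : 0 < M) {μ : K} (hμ : IsPrimitiveRoot μ (2 * M)) {t a b : K}
    (hsum : a + b = 2 + 2 * t) (hprod : a * b = 2 * t) :
    ∏ k ∈ (range (2 * M)).filter Odd, (t - (-(1 - μ ^ k) / 2 + 1 / (2 * (1 - μ ^ k)))) =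
      (a ^ M + 1) * (b ^ M + 1) / 2 ^ (M + 1) := by
  have hfactor (k) (hk : k ∈ (range (2 * M)).filter Odd) :=
    sub_s_eq_mul_div h2 hsum hprod (hμ.pow_ne_one_of_odd (mem_filter.mp hk).2)
  rw [prod_congr rfl hfactor, prod_div_distrib, prod_mul_distrib, prod_mul_distrib, prod_const,
    card_filter_odd_range_two_mul, hμ.prod_filter_odd_sub_pow hM, hμ.prod_filter_odd_sub_pow hM,
    hμ.prod_filter_odd_sub_pow hM]
  ring

theorem Polynomial.dickson_one_eval_add {R : Type*} [CommRing R] (x y : R) :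
    ∀ n, (dickson 1 (x * y) n).eval (x + y) = x ^ n + y ^ n
  | 0 => by norm_num
  | 1 => by simp
  | n + 2 => by
    simp only [dickson_add_two, eval_sub, eval_mul, eval_X, eval_C,
      dickson_one_eval_add x y n, dickson_one_eval_add x y (n + 1)]
    ring

/-- `(a ^ M + 1) (b ^ M + 1)` for the roots `a, b` of `X² - (2 + 2t) X + 2t`, expanded as
`(ab) ^ M + (a ^ M + b ^ M) + 1`. -/
noncomputable def mNumerator (M : ℕ) (t : ℤ) : ℤ :=
  (2 * t) ^ M + (dickson 1 (2 * t) M).eval (2 + 2 * t) + 1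

theorem intCast_mNumerator {R : Type*} [CommRing R] (M : ℕ) (t : ℤ) {a b : R}
    (hsum : a + b = 2 + 2 * t) (hprod : a * b = 2 * t) :
    (mNumerator M t : R) = (a ^ M + 1) * (b ^ M + 1) := by
  have hD : (((dickson 1 (2 * t) M).eval (2 + 2 * t) : ℤ) : R) = a ^ M + b ^ M := by
    rw [← eq_intCast (Int.castRingHom R), ← eval₂_hom, ← eval_map, map_dickson]
    simp only [eq_intCast, Int.cast_add, Int.cast_mul, Int.cast_ofNat]
    rw [← hsum, ← hprod, dickson_one_eval_add]
  simp only [mNumerator, Int.cast_add, Int.cast_pow, Int.cast_mul, Int.cast_ofNat, Int.cast_one, hD]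
  rw [← hprod]
  ring

theorem exists_real_sum_prod (t : ℝ) : ∃ a b : ℝ, a + b = 2 + 2 * t ∧ a * b = 2 * t := by
  have hr := Real.sq_sqrt (show 0 ≤ t ^ 2 + 1 by positivity)
  exact ⟨1 + t - √(t ^ 2 + 1), 1 + t + √(t ^ 2 + 1), by ring, by linear_combination -hr⟩

theorem mNumerator_pos {M : ℕ} {t : ℤ} (ht : 0 ≤ t) : 0 < mNumerator M t := by
  obtain ⟨a, b, hsum, hprod⟩ := exists_real_sum_prod t
  have ht' : (0 : ℝ) ≤ t := by exact_mod_cast ht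
  have ha : 0 ≤ a := by nlinarith
  have hb : 0 ≤ b := by nlinarith
  have := intCast_mNumerator (R := ℝ) M t hsum hprod
  exact_mod_cast this ▸ (by positivity : (0:ℝ) < (a ^ M + 1) * (b ^ M + 1))

theorem exists_add_eq_and_mul_eq {F : Type*} [Field F] (h2 : (2 : F) ≠ 0) {u : F} (hu : u ≠ 1) :
    ∃ τ b : F, u + b = 2 + 2 * τ ∧ u * b = 2 * τ := by
  have hu' : u - 1 ≠ 0 := sub_ne_zero.mpr hu
  obtain ⟨τ, hτ⟩ : ∃ τ : F, 2 * τ * (u - 1) = u ^ 2 - 2 * u :=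
    ⟨(u ^ 2 - 2 * u) / (2 * (u - 1)), by field_simp⟩
  exact ⟨τ, 2 + 2 * τ - u, by ring, by linear_combination hτ⟩

theorem FiniteField.exists_isPrimitiveRoot_of_dvd {F : Type*} [Field F] [Finite F] {d : ℕ}
    (hd : d ∣ Nat.card F - 1) : ∃ ζ : F, IsPrimitiveRoot ζ d := by
  obtain ⟨g, hg⟩ := IsCyclic.exists_ofOrder_eq_natCard (α := Fˣ)
  rw [Nat.card_units] at hg
  have hζ : IsPrimitiveRoot (g : F) (Nat.card F - 1) :=
    IsPrimitiveRoot.coe_units_iff.mpr (hg ▸ IsPrimitiveRoot.orderOf g)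
  obtain ⟨c, hc⟩ := hd
  have hcard := Finite.one_lt_card (α := F)
  exact ⟨_, hζ.pow (by omega) (hc.trans (mul_comm d c))⟩

theorem exists_dvd_mNumerator {p M : ℕ} [Fact p.Prime] (hp2 : p ≠ 2) (hM : 0 < M)
    (hdvd : 2 * M ∣ p - 1) : ∃ t : ℤ, 0 ≤ t ∧ (p : ℤ) ∣ mNumerator M t := by
  obtain ⟨u, hu⟩ := FiniteField.exists_isPrimitiveRoot_of_dvd (F := ZMod p) (by simpa using hdvd)
  have h2 : (2 : ZMod p) ≠ 0 := Ring.two_ne_zero (by rwa [ZMod.ringChar_zmod_n])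
  obtain ⟨τ, b, hsum, hprod⟩ := exists_add_eq_and_mul_eq h2 (hu.ne_one (by omega))
  refine ⟨τ.val, by positivity, (ZMod.intCast_zmod_eq_zero_iff_dvd _ p).mp ?_⟩
  have huM : u ^ M = -1 := (hu.pow (by omega) (mul_comm 2 M)).eq_neg_one_of_two_right
  rw [intCast_mNumerator M _ (a := u) (b := b) (by simpa using hsum) (by simpa using hprod), huM]
  ring

theorem padicValRat_div_two_pow_pos {p : ℕ} [Fact p.Prime] (hp2 : p ≠ 2) {K : ℤ} (hK : K ≠ 0)
    (hdvd : (p : ℤ) ∣ K) (j : ℕ) : 0 < padicValRat p (K / 2 ^ j) := by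
  have hv2 : padicValRat p 2 = 0 := by
    have : Fact (Nat.Prime 2) := ⟨Nat.prime_two⟩
    have h := padicValRat.of_nat (p := p) (n := 2)
    rw [Nat.cast_ofNat] at h
    rw [h, padicValNat_primes hp2, Nat.cast_zero]
  have hvK : 1 ≤ padicValInt p K := by
    simpa [hK] using (padicValInt_dvd_iff (p := p) 1 K).mp (by simpa using hdvd)
  rw [padicValRat.div (by exact_mod_cast hK) (by positivity), padicValRat.pow, hv2,
    padicValRat.of_int]
  omega

/-- let `n ≥ 3`, `p` an odd prime with `p ≡ 1 (mod 2^(n-1))`, and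
`m(X) = ∏_{k ∈ (ℤ/2^(n-1)ℤ)*} (X - s_k)` where `s_k = -(1-ζ^k)/2 + 1/(2(1-ζ^k))` and
`ζ = exp(2πi/2^(n-1))`. Then there is an integer `t` such that `m(t)` is a (nonzero)
rational number of positive `p`-adic valuation. The product is indexed by the integers
`0 ≤ k < 2^(n-1)` coprime to `2^(n-1)`, i.e. by the units of `ℤ/2^(n-1)ℤ`. -/
theorem stmt_12 (n : ℕ) (hn : 3 ≤ n) (p : ℕ) (hp : p.Prime) (hodd : Odd p)
    (hp1 : p % 2 ^ (n - 1) = 1) (ζ : ℂ)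
    (hζ : ζ = Complex.exp (2 * Real.pi * Complex.I / (2 ^ (n - 1) : ℕ))) :
    ∃ t : ℤ, ∃ q : ℚ, q ≠ 0 ∧
      (q : ℂ) = ∏ k ∈ (Finset.range (2 ^ (n - 1))).filter (fun k => Nat.gcd k (2 ^ (n - 1)) = 1),
        ((t : ℂ) - (-(1 - ζ ^ k) / 2 + 1 / (2 * (1 - ζ ^ k)))) ∧
      0 < padicValRat p q := by
  have : Fact p.Prime := ⟨hp⟩
  obtain ⟨M, hM, hNM⟩ : ∃ M, 0 < M ∧ 2 ^ (n - 1) = 2 * M :=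
    ⟨2 ^ (n - 2), by positivity, by rw [← pow_succ']; congr 1; omega⟩
  have hp2 : p ≠ 2 := by rintro rfl; exact Nat.not_odd_iff_even.mpr even_two hodd
  have hcoprime : ∀ k, Nat.gcd k (2 ^ (n - 1)) = 1 ↔ Odd k := fun k =>
    (Nat.coprime_pow_right_iff (by omega) k 2).trans Nat.coprime_two_right
  have hμ : IsPrimitiveRoot ζ (2 * M) := hζ ▸ hNM ▸ Complex.isPrimitiveRoot_exp _ (by positivity)
  have hdvd : 2 * M ∣ p - 1 := by
    have := Nat.dvd_sub_mod (n := 2 ^ (n - 1)) p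
    rwa [hp1, hNM] at this
  obtain ⟨t, ht, hpt⟩ := exists_dvd_mNumerator hp2 hM hdvd
  have hK := mNumerator_pos (M := M) ht
  refine ⟨t, mNumerator M t / 2 ^ (M + 1), by positivity, ?_,
    padicValRat_div_two_pow_pos hp2 hK.ne' hpt _⟩
  obtain ⟨a, b, hsum, hprod⟩ := exists_real_sum_prod t
  have hsumC : (a : ℂ) + b = 2 + 2 * t := by exact_mod_cast hsum
  have hprodC : (a : ℂ) * b = 2 * t := by exact_mod_cast hprod
  rw [filter_congr fun k _ => hcoprime k, hNM, hμ.prod_filter_odd_sub_s two_ne_zero hM hsumC hprodC,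
    ← intCast_mNumerator M t hsumC hprodC]
  push_cast
  ring
end
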